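/- Let G be a labeled block graph, let B' be a support block of G, let c_i ∈ C\{c_h} be a cut vertex of B', and let B_{ij} be an end block of G whose unique cut vertex is c_i. If l_2(B_{ij}) ≥ 2, then γ(G) = γ(G'), where G' is the labeled block graph obtained from G by relabelling max{3 − |r(V(B_{ij}))|, 0} vertices of B_{ij} that have t-label B as R, with priority given to c_i, and keeping every other label the same. -/

import Mathlib

open SimpleGraph
open scoped Classical

/-- The two possible t-labels of a vertex of a labeled block graph. -/
inductive TLabel
  | B
  | R
deriving DecidableEq

/-- A labeled graph: a graph together with labels `M_V(v) = (t v, s v)` on vertices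
and `k e` on (potential) edges. -/
structure LBG (V : Type*) where
  graph : SimpleGraph V
  t : V → TLabel
  s : V → ℕ
  k : Sym2 V → ℕ

variable {V : Type*}

/-- closed neighbourhood `N_G[v]` -/
def cN (G : SimpleGraph V) (v : V) : Set V := insert v {u | G.Adj v u}

/-- open neighbourhood `N_G(v)` -/
def oN (G : SimpleGraph V) (v : V) : Set V := {u | G.Adj v u}

/-- closed neighbourhood `N_G[e]` of an edge -/
def eN (G : SimpleGraph V) (e : Sym2 V) : Set V := {w | ∃ x ∈ e, w ∈ cN G x}

/-- `r(S)`: the vertices of `S` with t-label `R`. -/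
def rSet (H : LBG V) (S : Set V) : Set V := {v | v ∈ S ∧ H.t v = TLabel.R}

/-- An `M_{LVE}`-dominating set of a labeled graph. -/
def IsMLVE (H : LBG V) (L : Set V) : Prop :=
  (∀ v, H.t v = TLabel.R → v ∈ L) ∧
  (∀ v, H.s v ≤ (cN H.graph v ∩ L).ncard) ∧
  (∀ e ∈ H.graph.edgeSet, H.k e ≤ (eN H.graph e ∩ L).ncard) ∧
  (∀ e ∈ H.graph.edgeSet, ∀ f ∈ H.graph.edgeSet, e ≠ f →
    H.k e + H.k f - 1 ≤ ((eN H.graph e ∪ eN H.graph f) ∩ L).ncard)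

/-- `γ(G)`: the minimum cardinality of an `M_{LVE}`-dominating set. -/
noncomputable def gam (H : LBG V) : ℕ :=
  sInf {n | ∃ L : Set V, IsMLVE H L ∧ L.ncard = n}

/-- A liar's vertex-edge dominating set. -/
def IsLiarVE (G : SimpleGraph V) (L : Set V) : Prop :=
  (∀ e ∈ G.edgeSet, 2 ≤ (eN G e ∩ L).ncard) ∧
  (∀ e ∈ G.edgeSet, ∀ f ∈ G.edgeSet, e ≠ f → 3 ≤ ((eN G e ∪ eN G f) ∩ L).ncard)

/-- `v` is a cut vertex of `G`: removing it disconnects two vertices that were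
connected in `G`. -/
def IsCutVertex (G : SimpleGraph V) (v : V) : Prop :=
  ∃ x y : {u : V // u ≠ v}, G.Reachable x.1 y.1 ∧
    ¬ (G.induce {u : V | u ≠ v}).Reachable ⟨x.1, x.2⟩ ⟨y.1, y.2⟩

/-- A vertex set inducing a connected subgraph without a cut vertex. -/
def GoodSet (G : SimpleGraph V) (Bs : Set V) : Prop :=
  (G.induce Bs).Connected ∧ ∀ v, ¬ IsCutVertex (G.induce Bs) v

/-- A block of `G`: a maximal connected subgraph without a cut vertex. -/
def IsBlock (G : SimpleGraph V) (Bs : Set V) : Prop :=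
  GoodSet G Bs ∧ ∀ Bs' : Set V, Bs ⊆ Bs' → GoodSet G Bs' → Bs' = Bs

/-- A block graph: every block is a clique. -/
def IsBlockGraph (G : SimpleGraph V) : Prop :=
  ∀ Bs : Set V, IsBlock G Bs → G.IsClique Bs

/-- `Bs` is an end block of `G` whose unique cut vertex is `c`. -/
def EndBlockWith (G : SimpleGraph V) (Bs : Set V) (c : V) : Prop :=
  IsBlock G Bs ∧ c ∈ Bs ∧ IsCutVertex G c ∧ ∀ c' ∈ Bs, IsCutVertex G c' → c' = c

/-- The cut-tree of `G`: vertices are the blocks and the cut vertices of `G`,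
with an edge joining a block to each cut vertex it contains. -/
def cutTree (G : SimpleGraph V) :
    SimpleGraph ({Bs : Set V // IsBlock G Bs} ⊕ {v : V // IsCutVertex G v}) :=
  SimpleGraph.fromRel (fun a b =>
    match a, b with
    | Sum.inl Bs, Sum.inr c => (c : V) ∈ (Bs : Set V)
    | _, _ => False)

/-- Distance to the root `ρ` (a cut vertex) in the cut-tree. -/
noncomputable def rootDist (G : SimpleGraph V) (ρ : {v : V // IsCutVertex G v})
    (x : {Bs : Set V // IsBlock G Bs} ⊕ {v : V // IsCutVertex G v}) : ℕ :=
  (cutTree G).dist x (Sum.inr ρ)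

/-- `Bi` is a descendant block of `Bj` in the cut-tree rooted at `ρ`:
`Bj` is the parent of the parent of `Bi`. -/
def IsDescBlock (G : SimpleGraph V) (ρ : {v : V // IsCutVertex G v})
    (Bj Bi : {Bs : Set V // IsBlock G Bs}) : Prop :=
  ∃ c : {v : V // IsCutVertex G v}, (c : V) ∈ (Bi : Set V) ∧ (c : V) ∈ (Bj : Set V) ∧
    rootDist G ρ (Sum.inr c) + 1 = rootDist G ρ (Sum.inl Bi) ∧
    rootDist G ρ (Sum.inl Bj) + 1 = rootDist G ρ (Sum.inr c)

/-- A support block: all of its descendant blocks are end blocks of `G`. -/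
def IsSupportBlock (G : SimpleGraph V) (ρ : {v : V // IsCutVertex G v})
    (B' : {Bs : Set V // IsBlock G Bs}) : Prop :=
  ∀ Bi, IsDescBlock G ρ B' Bi → ∃ c : V, EndBlockWith G (Bi : Set V) c

/-- The edges of (the subgraph induced by) a block `Bs`. -/
def blockEdges (G : SimpleGraph V) (Bs : Set V) : Set (Sym2 V) :=
  {e | e ∈ G.edgeSet ∧ ∀ x ∈ e, x ∈ Bs}

/-- Relabel all vertices of `A` with t-label `R`, keeping every other label the same. -/
noncomputable def relabelR (H : LBG V) (A : Set V) : LBG V :=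
  { H with t := fun v => if v ∈ A then TLabel.R else H.t v }

/-- `l_2(c)`: the number of edges of the end blocks whose unique cut vertex is `c`
that are incident to `c` and have k-label `2`. -/
noncomputable def l2cut (H : LBG V) (c : V) : ℕ :=
  ({e : Sym2 V | (∃ Bs : Set V, EndBlockWith H.graph Bs c ∧ e ∈ blockEdges H.graph Bs) ∧
     c ∈ e ∧ H.k e = 2}).ncard

/-!
Let `B` be the end block with cut vertex `c`. A vertex `v ≠ c` of `B` is not a cut vertex, so a
neighbour `w ∉ B` of `v` would reach `c` avoiding `v`, and that path would enlarge the block `B`;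
hence all neighbours of such `v` lie in `B`. Consequently every closed neighbourhood of a vertex
or an edge, and every union of two of them, either contains `B` or meets it at most in `c`, so the
constraints of an `M_{LVE}`-dominating set `L` only see `L ∩ B` through its size and whether it
contains `c`. The two edges of `B` with k-label 2 away from `c` force `|L ∩ B| ≥ 3`, which leaves
room to replace `L ∩ B` by a set of the same size containing `r(B)`, the relabelled vertices and
`c`.
-/
namespace SimpleGraph

variable {G : SimpleGraph V}

theorem IsClique.preconnected_induce {K : Set V} (hK : G.IsClique K) :
    (G.induce K).Preconnected := by
  intro x y
  by_cases hxy : x = y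
  · exact hxy ▸ Reachable.refl _
  · exact Adj.reachable (hK x.2 y.2 fun h => hxy (Subtype.ext h))

theorem connected_induce_of_walks_to_clique {s K : Set V} {u : V} (hK : G.IsClique K)
    (hKs : K ⊆ s) (hu : u ∈ K)
    (hwalk : ∀ x ∈ s, ∃ k ∈ K, ∃ q : G.Walk x k, {y | y ∈ q.support} ⊆ s) :
    (G.induce s).Connected := by
  refine induce_connected_of_patches u (hKs hu) fun {x} hx => ?_
  obtain ⟨k, hk, q, hq⟩ := hwalk x hx
  have hconn := induce_union_connected hK.preconnected_induce
    q.connected_induce_support.preconnected ⟨k, hk, q.end_mem_support⟩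
  exact ⟨_, Set.union_subset hKs hq, Or.inl hu, Or.inr q.start_mem_support,
    hconn.preconnected _ _⟩

theorem Walk.IsPath.not_mem_support_takeUntil {a b x y : V} {p : G.Walk a b} (hp : p.IsPath)
    (hx : x ∈ p.support) (hyx : y ≠ x) (hy : y ∈ (p.dropUntil x hx).support) :
    y ∉ (p.takeUntil x hx).support := by
  have hnodup := hp.support_nodup
  rw [← p.take_spec hx, Walk.support_append, List.nodup_append] at hnodup
  rw [← Walk.cons_tail_support, List.mem_cons] at hy
  exact fun hy' => hnodup.2.2 _ hy' _ (hy.resolve_left hyx) rfl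

theorem exists_isPath_of_reachable_induce_ne {v a b : V} {ha : a ≠ v} {hb : b ≠ v}
    (h : (G.induce {x | x ≠ v}).Reachable ⟨a, ha⟩ ⟨b, hb⟩) :
    ∃ p : G.Walk a b, p.IsPath ∧ v ∉ p.support := by
  obtain ⟨q⟩ := h
  let q' := q.map (Embedding.induce _).toHom
  refine ⟨q'.bypass, q'.bypass_isPath, fun hv => ?_⟩
  obtain ⟨x, -, hx⟩ := List.mem_map.1 (q.support_map _ ▸ q'.support_bypass_subset_support hv)
  exact x.2 hx

theorem not_isCutVertex_of_preconnected_induce {u : V}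
    (h : (G.induce {x | x ≠ u}).Preconnected) : ¬ IsCutVertex G u :=
  fun ⟨_, _, _, hxy⟩ => hxy (h _ _)

theorem not_isCutVertex_induce_of_connected_diff {s : Set V} (u : s)
    (h : (G.induce (s \ {(u : V)})).Connected) : ¬ IsCutVertex (G.induce s) u := by
  let f : G.induce (s \ {(u : V)}) →g (G.induce s).induce {x | x ≠ u} :=
    ⟨fun x => ⟨⟨x, x.2.1⟩, fun hx => x.2.2 (congrArg Subtype.val hx)⟩, id⟩
  refine not_isCutVertex_of_preconnected_induce (h.preconnected.map f ?_)
  rintro ⟨⟨x, hx⟩, hxu⟩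
  exact ⟨⟨x, hx, fun h => hxu (Subtype.ext h)⟩, rfl⟩

/-- A clique with an ear `v - w - ⋯ - c` attached stays connected after deleting any vertex. -/
theorem connected_induce_union_support_diff {Bs : Set V} {c v w : V} (hcl : G.IsClique Bs)
    (hc : c ∈ Bs) (hv : v ∈ Bs) (hvc : v ≠ c) (hvw : G.Adj v w) {p : G.Walk w c}
    (hp : p.IsPath) (hvp : v ∉ p.support) (u : V) :
    (G.induce ((Bs ∪ {x | x ∈ p.support}) \ {u})).Connected := by
  obtain ⟨u₀, hu₀⟩ : (Bs \ {u}).Nonempty := by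
    by_cases huv : u = v
    · exact ⟨c, hc, fun h => hvc (huv ▸ h).symm⟩
    · exact ⟨v, hv, fun h => huv h.symm⟩
  refine connected_induce_of_walks_to_clique (hcl.subset Set.sdiff_subset)
    (Set.sdiff_subset_sdiff_left Set.subset_union_left) hu₀ ?_
  rintro x ⟨hx | hx, hxu⟩
  · exact ⟨x, ⟨hx, hxu⟩, Walk.nil, by simpa using ⟨Or.inl hx, hxu⟩⟩
  by_cases hud : u ∈ (p.dropUntil x hx).support
  · have hut := hp.not_mem_support_takeUntil hx (Ne.symm hxu) hud
    have hvu : v ≠ u := fun h => hvp (h ▸ p.support_dropUntil_subset_support hx hud)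
    refine ⟨v, ⟨hv, hvu⟩, (p.takeUntil x hx).reverse.concat hvw.symm, fun y hy => ?_⟩
    simp only [Set.mem_ofPred_eq, Walk.support_concat, Walk.support_reverse,
      List.mem_append, List.mem_reverse, List.mem_singleton] at hy
    rcases hy with hy | rfl
    · exact ⟨Or.inr (p.support_takeUntil_subset_support hx hy), fun h => hut (h ▸ hy)⟩
    · exact ⟨Or.inl hv, hvu⟩
  · refine ⟨c, ⟨hc, fun h => hud (h ▸ Walk.end_mem_support _)⟩, p.dropUntil x hx,
      fun y hy => ⟨Or.inr (p.support_dropUntil_subset_support hx hy), fun h => hud (h ▸ hy)⟩⟩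

theorem IsBlock.mem_of_adj_of_not_isCutVertex {Bs : Set V} {c v w : V} (hB : IsBlock G Bs)
    (hcl : G.IsClique Bs) (hc : c ∈ Bs) (hv : v ∈ Bs) (hvc : v ≠ c)
    (hv_cut : ¬ IsCutVertex G v) (hvw : G.Adj v w) : w ∈ Bs := by
  unfold IsCutVertex at hv_cut
  push Not at hv_cut
  obtain ⟨p, hp, hvp⟩ := exists_isPath_of_reachable_induce_ne <| hv_cut ⟨w, hvw.ne'⟩
    ⟨c, hvc.symm⟩ (hvw.symm.reachable.trans (hcl hv hc hvc).reachable)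
  have hgood : GoodSet G (Bs ∪ {x | x ∈ p.support}) := by
    refine ⟨connected_induce_of_walks_to_clique hcl Set.subset_union_left hc ?_,
      fun u => not_isCutVertex_induce_of_connected_diff u
        (connected_induce_union_support_diff hcl hc hv hvc hvw hp hvp u)⟩
    rintro x (hx | hx)
    · exact ⟨x, hx, Walk.nil, by simpa using Or.inl hx⟩
    · exact ⟨c, hc, p.dropUntil x hx,
        fun y hy => Or.inr (p.support_dropUntil_subset_support hx hy)⟩
  rw [← hB.2 _ Set.subset_union_left hgood]
  exact Or.inr p.start_mem_support

theorem EndBlockWith.mem_of_adj {Bs : Set V} {c v w : V} (hEnd : EndBlockWith G Bs c)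
    (hcl : G.IsClique Bs) (hv : v ∈ Bs) (hvc : v ≠ c) (hvw : G.Adj v w) : w ∈ Bs :=
  hEnd.1.mem_of_adj_of_not_isCutVertex hcl hEnd.2.1 hv hvc
    (fun hcut => hvc (hEnd.2.2.2 v hv hcut)) hvw

end SimpleGraph

open Set

section AllOrCut

variable {B L L' X : Set V} {c : V}

def AllOrCut (B : Set V) (c : V) (X : Set V) : Prop :=
  X ∩ B ⊆ {c} ∨ B ⊆ X

theorem AllOrCut.union {Y : Set V} (hX : AllOrCut B c X) (hY : AllOrCut B c Y) :
    AllOrCut B c (X ∪ Y) := by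
  rcases hX with hX | hX
  · rcases hY with hY | hY
    · exact Or.inl (union_inter_distrib_right X Y B ▸ union_subset hX hY)
    · exact Or.inr (hY.trans subset_union_right)
  · exact Or.inr (hX.trans subset_union_left)

theorem allOrCut_cN {G : SimpleGraph V} (hcl : G.IsClique B)
    (hclosed : ∀ v ∈ B, v ≠ c → ∀ w, G.Adj v w → w ∈ B) (v : V) : AllOrCut B c (cN G v) := by
  by_cases hv : v ∈ B
  · refine Or.inr fun u hu => ?_
    rcases eq_or_ne u v with rfl | huv
    · exact mem_insert _ _
    · exact Or.inr (hcl hv hu huv.symm)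
  · refine Or.inl ?_
    rintro u ⟨rfl | hvu, huB⟩
    · exact absurd huB hv
    · by_contra huc
      exact hv (hclosed u huB huc v hvu.symm)

theorem allOrCut_eN {G : SimpleGraph V} (h : ∀ v, AllOrCut B c (cN G v)) (e : Sym2 V) :
    AllOrCut B c (eN G e) := by
  by_cases hB : ∃ x ∈ e, B ⊆ cN G x
  · obtain ⟨x, hx, hB⟩ := hB
    exact Or.inr fun z hz => ⟨x, hx, hB hz⟩
  · push Not at hB
    refine Or.inl ?_
    rintro z ⟨⟨x, hx, hz⟩, hzB⟩
    exact (h x).resolve_right (hB x hx) ⟨hz, hzB⟩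

theorem eN_subset_of_closed {G : SimpleGraph V}
    (hclosed : ∀ v ∈ B, v ≠ c → ∀ w, G.Adj v w → w ∈ B) {e : Sym2 V} (he : ∀ x ∈ e, x ∈ B)
    (hce : c ∉ e) : eN G e ⊆ B := by
  rintro z ⟨x, hx, rfl | hz⟩
  · exact he _ hx
  · exact hclosed x (he x hx) (fun h => hce (h ▸ hx)) z hz

variable [Finite V]

theorem ncard_inter_eq_of_subset (hBX : B ⊆ X) (hdiff : L' \ B = L \ B)
    (hcard : (B ∩ L').ncard = (B ∩ L).ncard) : (X ∩ L').ncard = (X ∩ L).ncard := by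
  have hsplit (M : Set V) : (X ∩ M).ncard = (B ∩ M).ncard + (X ∩ (M \ B)).ncard := by
    rw [← ncard_inter_add_ncard_sdiff_eq_ncard (X ∩ M) B, inter_sdiff_assoc,
      inter_right_comm, inter_eq_right.2 hBX]
  rw [hsplit L', hsplit L, hcard, hdiff]

theorem AllOrCut.ncard_inter_le (hX : AllOrCut B c X) (hdiff : L' \ B = L \ B)
    (hcard : (B ∩ L').ncard = (B ∩ L).ncard) (hc : c ∈ L') :
    (X ∩ L).ncard ≤ (X ∩ L').ncard := by
  rcases hX with hX | hX
  · refine ncard_le_ncard fun z ⟨hzX, hzL⟩ => ⟨hzX, ?_⟩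
    by_cases hzB : z ∈ B
    · exact (hX ⟨hzX, hzB⟩ : z = c) ▸ hc
    · exact (hdiff ▸ (⟨hzL, hzB⟩ : z ∈ L \ B) : z ∈ L' \ B).1
  · exact (ncard_inter_eq_of_subset hX hdiff hcard).ge

end AllOrCut

section Dominating

variable {H H' : LBG V} {A B L : Set V} {c : V}

@[simp]
theorem relabelR_empty (H : LBG V) : relabelR H ∅ = H := by
  cases H
  simp [relabelR]

theorem isMLVE_relabelR_iff : IsMLVE (relabelR H A) L ↔ A ⊆ L ∧ IsMLVE H L := by
  have ht : (∀ v, (relabelR H A).t v = TLabel.R → v ∈ L) ↔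
      A ⊆ L ∧ ∀ v, H.t v = TLabel.R → v ∈ L := by
    simp only [relabelR]
    constructor
    · intro h
      refine ⟨fun v hv => h v (if_pos hv), fun v hv => h v ?_⟩
      split_ifs <;> [rfl; exact hv]
    · rintro ⟨hA, hR⟩ v hv
      split_ifs at hv with hvA
      exacts [hA hvA, hR v hv]
  unfold IsMLVE
  rw [ht, and_assoc]
  rfl

theorem IsMLVE.three_le_ncard_inter [Finite V] (hL : IsMLVE H L) {e f : Sym2 V}
    (he : e ∈ H.graph.edgeSet) (hf : f ∈ H.graph.edgeSet) (hef : e ≠ f) (hke : H.k e = 2)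
    (hkf : H.k f = 2) (heB : eN H.graph e ⊆ B) (hfB : eN H.graph f ⊆ B) :
    3 ≤ (B ∩ L).ncard := by
  have h := hL.2.2.2 e he f hf hef
  rw [hke, hkf] at h
  exact h.trans (ncard_le_ncard (inter_subset_inter_left L (union_subset heB hfB)))

theorem IsMLVE.of_exchange [Finite V] {L' : Set V} (hL : IsMLVE H L)
    (hcN : ∀ v, AllOrCut B c (cN H.graph v)) (hR : ∀ v, H.t v = TLabel.R → v ∈ L')
    (hdiff : L' \ B = L \ B) (hcard : (B ∩ L').ncard = (B ∩ L).ncard) (hc : c ∈ L') :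
    IsMLVE H L' := by
  have hle {X : Set V} (hX : AllOrCut B c X) := hX.ncard_inter_le hdiff hcard hc
  have heN := allOrCut_eN hcN
  exact ⟨hR, fun v => (hL.2.1 v).trans (hle (hcN v)),
    fun e he => (hL.2.2.1 e he).trans (hle (heN e)),
    fun e he f hf hef => (hL.2.2.2 e he f hf hef).trans (hle ((heN e).union (heN f)))⟩

theorem IsMLVE.exists_relabelR [Finite V] (hL : IsMLVE H L)
    (hcN : ∀ v, AllOrCut B c (cN H.graph v)) (hAB : A ⊆ B) (hc : c ∈ rSet H B ∪ A)
    (hsize : (rSet H B ∪ A).ncard ≤ (B ∩ L).ncard) :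
    ∃ L', IsMLVE (relabelR H A) L' ∧ L'.ncard = L.ncard := by
  obtain ⟨B₁, hsub, hB₁B, hB₁card⟩ := exists_subsuperset_card_eq
    (union_subset (fun v hv => hv.1) hAB) hsize (ncard_le_ncard inter_subset_left)
  set L' := L \ B ∪ B₁
  have hdiff : L' \ B = L \ B := by
    rw [union_sdiff_distrib, sdiff_idem, sdiff_eq_empty.2 hB₁B, union_empty]
  have hinter : B ∩ L' = B₁ := by
    rw [inter_union_distrib_left, inter_sdiff_self, empty_union, inter_eq_right.2 hB₁B]
  have hcard : (B ∩ L').ncard = (B ∩ L).ncard := hinter ▸ hB₁card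
  have hR (v : V) (hv : H.t v = TLabel.R) : v ∈ L' := by
    by_cases hvB : v ∈ B
    · exact Or.inr (hsub (Or.inl ⟨hvB, hv⟩))
    · exact Or.inl ⟨hL.1 v hv, hvB⟩
  refine ⟨L', isMLVE_relabelR_iff.2 ⟨fun v hv => Or.inr (hsub (Or.inr hv)),
    hL.of_exchange hcN hR hdiff hcard (Or.inr (hsub hc))⟩, ?_⟩
  simpa using ncard_inter_eq_of_subset (subset_univ B) hdiff hcard

theorem gam_le_of_forall_exists
    (h : ∀ L, IsMLVE H L → ∃ L', IsMLVE H' L' ∧ L'.ncard ≤ L.ncard) (hH : ∃ L, IsMLVE H L) :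
    gam H' ≤ gam H := by
  obtain ⟨L, hL⟩ := hH
  have hne : {n | ∃ L, IsMLVE H L ∧ L.ncard = n}.Nonempty := ⟨L.ncard, L, hL, rfl⟩
  obtain ⟨L₀, hL₀, hL₀min⟩ := Nat.sInf_mem hne
  obtain ⟨L', hL', hle⟩ := h L₀ hL₀
  exact (Nat.sInf_le (⟨L', hL', rfl⟩ : L'.ncard ∈ {n | ∃ L, IsMLVE H' L ∧ L.ncard = n})).trans
    (hle.trans hL₀min.le)

theorem gam_eq_zero_of_forall_not (h : ∀ L, ¬ IsMLVE H L) : gam H = 0 := by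
  simp [gam, h]

theorem gam_eq_of_forall_exists
    (h₁ : ∀ L, IsMLVE H L → ∃ L', IsMLVE H' L' ∧ L'.ncard ≤ L.ncard)
    (h₂ : ∀ L, IsMLVE H' L → ∃ L', IsMLVE H L' ∧ L'.ncard ≤ L.ncard) : gam H = gam H' := by
  by_cases hH : ∃ L, IsMLVE H L
  · obtain ⟨L, hL⟩ := hH
    obtain ⟨L', hL', -⟩ := h₁ L hL
    exact le_antisymm (gam_le_of_forall_exists h₂ ⟨L', hL'⟩) (gam_le_of_forall_exists h₁ ⟨L, hL⟩)
  · push Not at hH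
    have hH' (L : Set V) (hL : IsMLVE H' L) : False :=
      let ⟨L', hL', _⟩ := h₂ L hL
      hH L' hL'
    rw [gam_eq_zero_of_forall_not hH, gam_eq_zero_of_forall_not hH']

end Dominating

theorem stmt_0_general
    {V : Type*} [Fintype V]
    (H : LBG V)
    (hBG : IsBlockGraph H.graph)
    (ci : V)
    (Bij : Set V) (hEnd : EndBlockWith H.graph Bij ci)
    (hl2 : 2 ≤ ({e : Sym2 V | e ∈ blockEdges H.graph Bij ∧ ci ∉ e ∧ H.k e = 2}).ncard)
    (A : Set V)
    (hAsub : A ⊆ {v | v ∈ Bij ∧ H.t v = TLabel.B})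
    (hAcard : A.ncard = 3 - (rSet H Bij).ncard)
    (hApri : H.t ci = TLabel.B → A.Nonempty → ci ∈ A) :
    gam H = gam (relabelR H A) := by
  rcases A.eq_empty_or_nonempty with rfl | hA
  · rw [relabelR_empty]
  have hcl : H.graph.IsClique Bij := hBG Bij hEnd.1
  have hclosed (v : V) (hv : v ∈ Bij) (hvc : v ≠ ci) (w : V) (hvw : H.graph.Adj v w) : w ∈ Bij :=
    hEnd.mem_of_adj hcl hv hvc hvw
  obtain ⟨e, ⟨he, hcie, hke⟩, f, ⟨hf, hcif, hkf⟩, hef⟩ := (one_lt_ncard (toFinite _)).1 hl2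
  have hci : ci ∈ rSet H Bij ∪ A := by
    cases hci : H.t ci
    exacts [Or.inr (hApri hci hA), Or.inl ⟨hEnd.2.1, hci⟩]
  have hdisj : Disjoint (rSet H Bij) A :=
    disjoint_left.2 fun v hvr hvA => by simpa [hvr.2] using (hAsub hvA).2
  refine gam_eq_of_forall_exists (fun L hL => ?_)
    (fun L hL => ⟨L, (isMLVE_relabelR_iff.1 hL).2, le_rfl⟩)
  have h3 := hL.three_le_ncard_inter he.1 hf.1 hef hke hkf
    (eN_subset_of_closed hclosed he.2 hcie) (eN_subset_of_closed hclosed hf.2 hcif)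
  have hr : (rSet H Bij).ncard ≤ (Bij ∩ L).ncard :=
    ncard_le_ncard fun v hv => ⟨hv.1, hL.1 v hv.2⟩
  obtain ⟨L', hL', hcard⟩ := hL.exists_relabelR (allOrCut_cN hcl hclosed)
    (fun v hv => (hAsub hv).1) hci (by rw [ncard_union_eq hdisj, hAcard]; omega)
  exact ⟨L', hL', hcard.le⟩

theorem stmt_0
    {V : Type*} [Fintype V] [DecidableEq V]
    (H : LBG V)
    (hBG : IsBlockGraph H.graph)
    (hk : ∀ e : Sym2 V, H.k e ≤ 2)
    (ρ : {v : V // IsCutVertex H.graph v})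
    (B' : {Bs : Set V // IsBlock H.graph Bs})
    (hsupp : IsSupportBlock H.graph ρ B')
    (ch : V) (hchCut : IsCutVertex H.graph ch) (hchB : ch ∈ (B' : Set V))
    (hchMin : ∀ (c : V) (hc : IsCutVertex H.graph c), c ∈ (B' : Set V) →
      rootDist H.graph ρ (Sum.inr ⟨ch, hchCut⟩) ≤ rootDist H.graph ρ (Sum.inr ⟨c, hc⟩))
    (ci : V) (hciCut : IsCutVertex H.graph ci) (hciB : ci ∈ (B' : Set V)) (hcich : ci ≠ ch)
    (Bij : Set V) (hEnd : EndBlockWith H.graph Bij ci)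
    (hl2 : 2 ≤ ({e : Sym2 V | e ∈ blockEdges H.graph Bij ∧ ci ∉ e ∧ H.k e = 2}).ncard)
    (A : Set V)
    (hAsub : A ⊆ {v | v ∈ Bij ∧ H.t v = TLabel.B})
    (hAcard : A.ncard = 3 - (rSet H Bij).ncard)
    (hApri : H.t ci = TLabel.B → A.Nonempty → ci ∈ A) :
    gam H = gam (relabelR H A) :=
  stmt_0_general H hBG ci Bij hEnd hl2 A hAsub hAcard hApri
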